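/- For every n ∈ ℕ, Ω_punc is the disjoint union over p ∈ 𝒫 and x ∈ Punc(n, p) of the sets {ω^n(T) − x : T ∈ Ω_punc, p ∈ T}; that is, every T' ∈ Ω_punc can be written as T' = ω^n(T) − x with T ∈ Ω_punc, p ∈ T, p ∈ 𝒫 and x ∈ Punc(n, p), and the triple (p, x, T) is uniquely determined by T'. (This is the set-level form of the identity 1 = Σ_{p∈𝒫} Σ_{x∈Punc(n,p)} e^n_p(x, x).) -/

import Mathlib

open Metric Set Pointwise

noncomputable section

/-- Points of `ℝ^d`. -/
abbrev Pt (d : ℕ) := EuclideanSpace ℝ (Fin d)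

/-- A (possibly labelled) tile in `ℝ^d`: a subset of `ℝ^d` together with a label. -/
structure Tile (d : ℕ) where
  carrier : Set (Pt d)
  label : ℕ

instance {d : ℕ} : Inhabited (Tile d) := ⟨⟨∅, 0⟩⟩

/-- Translate of a tile by a vector. -/
def Tile.translate {d : ℕ} (t : Tile d) (x : Pt d) : Tile d :=
  ⟨(fun y => y + x) '' t.carrier, t.label⟩

/-- A tile proper: homeomorphic to the closed unit ball. -/
def Tile.IsTile {d : ℕ} (t : Tile d) : Prop :=
  Nonempty (t.carrier ≃ₜ (Metric.closedBall (0 : Pt d) 1))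

/-- Support of a partial tiling: the union of its tiles. -/
def psupp {d : ℕ} (P : Set (Tile d)) : Set (Pt d) := ⋃ t ∈ P, t.carrier

/-- `tilesAt P U` = the tiles of `P` meeting `U`, written `P(U)` in the paper. -/
def tilesAt {d : ℕ} (P : Set (Tile d)) (U : Set (Pt d)) : Set (Tile d) :=
  {t ∈ P | (t.carrier ∩ U).Nonempty}

/-- Translate of a collection of tiles. -/
def translateSet {d : ℕ} (P : Set (Tile d)) (x : Pt d) : Set (Tile d) :=
  (fun t => t.translate x) '' P

/-- A partial tiling: tiles with pairwise disjoint interiors. -/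
def IsPartialTiling {d : ℕ} (P : Set (Tile d)) : Prop :=
  (∀ t ∈ P, t.IsTile) ∧
  ∀ t ∈ P, ∀ t' ∈ P, t ≠ t' → interior t.carrier ∩ interior t'.carrier = ∅

/-- A patch: a finite partial tiling. -/
def IsPatch {d : ℕ} (P : Set (Tile d)) : Prop := IsPartialTiling P ∧ P.Finite

/-- A tiling of all of `ℝ^d`. -/
def IsTilingOfSpace {d : ℕ} (P : Set (Tile d)) : Prop :=
  IsPartialTiling P ∧ psupp P = univ

/-- A substitution tiling system `(𝒫, ω)` with inflation constant `λ > 1`. -/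
structure SubstSystem (d : ℕ) where
  proto : Set (Tile d)
  proto_finite : proto.Finite
  proto_nonempty : proto.Nonempty
  proto_isTile : ∀ p ∈ proto, p.IsTile
  proto_zero_mem : ∀ p ∈ proto, (0 : Pt d) ∈ interior p.carrier
  proto_no_translate : ∀ p ∈ proto, ∀ q ∈ proto, ∀ x : Pt d,
    q = p.translate x → p = q ∧ x = 0
  lam : ℝ
  one_lt_lam : 1 < lam
  sub : Tile d → Set (Tile d)
  sub_patch : ∀ p ∈ proto, IsPatch (sub p)
  sub_proto : ∀ p ∈ proto, ∀ t ∈ sub p, ∃ q ∈ proto, ∃ x : Pt d, t = q.translate x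
  sub_supp : ∀ p ∈ proto, psupp (sub p) = lam • p.carrier
  sub_translate : ∀ (t : Tile d) (x : Pt d),
    sub (t.translate x) = (fun s => s.translate (lam • x)) '' sub t

namespace SubstSystem

variable {d : ℕ} (S : SubstSystem d)

/-- Tile-wise application of the substitution to a collection of tiles. -/
def subSet (P : Set (Tile d)) : Set (Tile d) := ⋃ t ∈ P, S.sub t

/-- Iterated substitution `ω^n` on collections of tiles. -/
def subIter (n : ℕ) (P : Set (Tile d)) : Set (Tile d) := (S.subSet)^[n] P

/-- `ω^n(t)` for a single tile `t`. -/
def omegan (n : ℕ) (t : Tile d) : Set (Tile d) := S.subIter n {t}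

/-- The continuous hull `Ω`. -/
def Omega : Set (Set (Tile d)) :=
  {T | IsTilingOfSpace T ∧ ∀ P : Set (Tile d), P ⊆ T → IsPatch P →
    ∃ n : ℕ, ∃ p ∈ S.proto, ∃ x : Pt d, P ⊆ translateSet (S.omegan n p) x}

/-- `x` is the puncture of the tile `t`, i.e. `t = p + x` for a prototile `p`. -/
def IsPuncture (t : Tile d) (x : Pt d) : Prop :=
  ∃ p ∈ S.proto, t = p.translate x

open Classical in
/-- The puncture `x(t)` of a tile `t` (chosen; unique for translates of prototiles). -/
def punc (t : Tile d) : Pt d :=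
  if h : ∃ x : Pt d, S.IsPuncture t x then h.choose else 0

/-- The punctured hull (transversal) `Ω_punc`. -/
def OmegaPunc : Set (Set (Tile d)) :=
  {T ∈ S.Omega | ∃ t ∈ T, S.IsPuncture t 0}

end SubstSystem

/-- The tiling metric. -/
def tilingDist {d : ℕ} (T T' : Set (Tile d)) : ℝ :=
  sInf ({1} ∪ {ε : ℝ | 0 < ε ∧ ∃ x x' : Pt d, ‖x‖ < ε ∧ ‖x'‖ < ε ∧
    tilesAt (translateSet T (-x)) (ball (0 : Pt d) (1 / ε)) =
      tilesAt (translateSet T' (-x')) (ball (0 : Pt d) (1 / ε))})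

namespace SubstSystem

variable {d : ℕ} (S : SubstSystem d)

/-- Density of a family of tilings in `Ω_punc` w.r.t. the tiling metric. -/
def DenseInPunc (E : Set (Set (Tile d))) : Prop :=
  ∀ T ∈ S.OmegaPunc, ∀ ε : ℝ, 0 < ε → ∃ T' ∈ E, tilingDist T T' < ε

/-- Openness of a subset of `Ω_punc` w.r.t. the tiling metric (subspace topology). -/
def OpenInPunc (E : Set (Set (Tile d))) : Prop :=
  E ⊆ S.OmegaPunc ∧ ∀ T ∈ E, ∃ ε : ℝ, 0 < ε ∧
    ∀ T' ∈ S.OmegaPunc, tilingDist T T' < ε → T' ∈ E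

/-- The translational equivalence relation `R_punc` on `Ω_punc`. -/
def Rpunc : Set (Set (Tile d) × Set (Tile d)) :=
  {TT | TT.1 ∈ S.OmegaPunc ∧ TT.2 ∈ S.OmegaPunc ∧ ∃ x : Pt d, TT.2 = translateSet TT.1 x}

/-- `Punc(n, p)`: the punctures of the tiles of `ω^n(p)`. -/
def Punc (n : ℕ) (p : Tile d) : Set (Pt d) :=
  {x | ∃ t ∈ S.omegan n p, S.IsPuncture t x}

/-- `E^n_p(x, y)`. -/
def Eset (n : ℕ) (p : Tile d) (x y : Pt d) : Set (Set (Tile d) × Set (Tile d)) :=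
  {TT | ∃ T ∈ S.OmegaPunc, p ∈ T ∧
    TT.1 = translateSet (S.subIter n T) (-x) ∧ TT.2 = translateSet (S.subIter n T) (-y)}

/-- `R_n`. -/
def Rn (n : ℕ) : Set (Set (Tile d) × Set (Tile d)) :=
  ⋃ p ∈ S.proto, ⋃ x ∈ S.Punc n p, ⋃ y ∈ S.Punc n p, S.Eset n p x y

/-- `R_AF = ∪ₙ R_n`. -/
def RAF : Set (Set (Tile d) × Set (Tile d)) := ⋃ n : ℕ, S.Rn n

/-- `U(P, t)`. -/
def Uset (P : Set (Tile d)) (t : Tile d) : Set (Set (Tile d)) :=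
  {T ∈ S.OmegaPunc | translateSet P (-(S.punc t)) ⊆ T}

/-- `V(P, t₁, t₂)`. -/
def Vset (P : Set (Tile d)) (t₁ t₂ : Tile d) : Set (Set (Tile d) × Set (Tile d)) :=
  {TT | TT.1 ∈ S.Uset P t₁ ∧ TT.2 = translateSet TT.1 (S.punc t₁ - S.punc t₂)}

/-- (A1) primitivity. -/
def Primitive : Prop :=
  ∃ N : ℕ, ∀ p ∈ S.proto, ∀ q ∈ S.proto, ∃ x : Pt d, Tile.translate q x ∈ S.omegan N p

/-- (A2) finite local complexity. -/
def FLC : Prop :=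
  ∀ R : ℝ, 0 < R → ∃ Ps : Set (Set (Tile d)), Ps.Finite ∧
    ∀ P : Set (Tile d), IsPatch P → Metric.diam (psupp P) < R →
      (∃ T ∈ S.Omega, P ⊆ T) → ∃ P₀ ∈ Ps, ∃ x : Pt d, P = translateSet P₀ x

/-- (A3) `ω : Ω → Ω` is bijective. -/
def SubBijective : Prop := Set.BijOn S.subSet S.Omega S.Omega

/-- (A4) `ω` forces its border. -/
def ForcesBorder : Prop :=
  ∃ n : ℕ, ∀ p ∈ S.proto, ∀ T ∈ S.Omega, ∀ T' ∈ S.Omega, ∀ x x' : Pt d,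
    translateSet (S.omegan n p) x ⊆ T → translateSet (S.omegan n p) x' ⊆ T' →
    translateSet (tilesAt T ((fun y => y + x) '' psupp (S.omegan n p))) (-x) =
      translateSet (tilesAt T' ((fun y => y + x') '' psupp (S.omegan n p))) (-x')

/-- Prototile boundaries have box-counting dimension strictly less than `d`. -/
def SmallBoundary : Prop :=
  ∃ c : ℝ, c < d ∧ ∃ K₀ : ℝ, ∀ p ∈ S.proto, ∀ ε : ℝ, 0 < ε →
    ∃ centers : Finset (Pt d), (centers.card : ℝ) ≤ K₀ * ε ^ (-c) ∧
      frontier p.carrier ⊆ ⋃ z ∈ centers, ball z ε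

end SubstSystem

/-- A symmetry group action for `(𝒫, ω)`: `G ≤ O(d, ℝ)` acting on tiles, preserving
the prototile set and commuting with the substitution. -/
structure SymmAction {d : ℕ} (S : SubstSystem d) (G : Subgroup (Pt d ≃ₗᵢ[ℝ] Pt d)) where
  act : G → Tile d → Tile d
  act_carrier : ∀ (g : G) (t : Tile d),
    (act g t).carrier = (g : Pt d ≃ₗᵢ[ℝ] Pt d) '' t.carrier
  act_one : ∀ t : Tile d, act 1 t = t
  act_mul : ∀ (g h : G) (t : Tile d), act (g * h) t = act g (act h t)
  act_proto : ∀ (g : G), ∀ p ∈ S.proto, act g p ∈ S.proto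
  act_translate : ∀ (g : G) (t : Tile d) (x : Pt d),
    act g (t.translate x) = (act g t).translate ((g : Pt d ≃ₗᵢ[ℝ] Pt d) x)
  act_sub : ∀ (g : G), ∀ p ∈ S.proto, S.sub (act g p) = act g '' S.sub p

/-- Action of a group element on a (partial) tiling: `gT = {gt : t ∈ T}`. -/
def SymmAction.actSet {d : ℕ} {S : SubstSystem d} {G : Subgroup (Pt d ≃ₗᵢ[ℝ] Pt d)}
    (σ : SymmAction S G) (g : G) (T : Set (Tile d)) : Set (Tile d) := σ.act g '' T

/-- `G` acts freely on the prototile set. -/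
def SymmAction.FreeOnProto {d : ℕ} {S : SubstSystem d} {G : Subgroup (Pt d ≃ₗᵢ[ℝ] Pt d)}
    (σ : SymmAction S G) : Prop := ∀ g : G, ∀ p ∈ S.proto, σ.act g p = p → g = 1

/-- Composition of relations. -/
def relComp {α : Type*} (R₁ R₂ : Set (α × α)) : Set (α × α) :=
  {q | ∃ z : α, (q.1, z) ∈ R₁ ∧ (z, q.2) ∈ R₂}

/-- Transpose (inverse) of a relation. -/
def relTrans {α : Type*} (R : Set (α × α)) : Set (α × α) := {q | (q.2, q.1) ∈ R}

end

/-!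
Since `ω^n` is a bijection of `Ω`, every `T' ∈ Ω_punc` is `ω^n(T₀)` for a unique `T₀ ∈ Ω`. The
tile of `T'` punctured at the origin lies in `ω^n(s)` for exactly one tile `s = p + y` of `T₀`
(supertiles have disjoint interiors), and translating `T₀` by `-y` gives the triple
`(p, -λ^n y, T₀ - y)`. Conversely any triple `(p, x, T)` representing `T'` must arise this way:
the tile of `ω^n(p)` punctured at `x` is the tile of `T'` at the origin, which pins down
`p` as its supertile, and then `x` and `T` because no prototile is a translate of another.
-/

namespace Tile

variable {d : ℕ}

@[simp]
lemma translate_translate (t : Tile d) (x y : Pt d) :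
    (t.translate x).translate y = t.translate (x + y) := by
  simp only [translate, Set.image_image, add_assoc]

@[simp]
lemma translate_zero (t : Tile d) : t.translate 0 = t := by
  simp [translate]

lemma interior_translate (t : Tile d) (x : Pt d) :
    interior (t.translate x).carrier = (· + x) '' interior t.carrier :=
  ((Homeomorph.addRight x).image_interior t.carrier).symm

lemma IsTile.translate {t : Tile d} (h : t.IsTile) (x : Pt d) : (t.translate x).IsTile :=
  let ⟨e⟩ := h
  ⟨((Homeomorph.addRight x).image t.carrier).symm.trans e⟩

end Tile

section Translation

variable {d : ℕ}

lemma mem_translateSet_iff {P : Set (Tile d)} {x : Pt d} {t : Tile d} :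
    t ∈ translateSet P x ↔ t.translate (-x) ∈ P := by
  refine ⟨?_, fun h => ⟨_, h, by simp⟩⟩
  rintro ⟨s, hs, rfl⟩
  simpa using hs

lemma translate_mem_translateSet {P : Set (Tile d)} {t : Tile d} (ht : t ∈ P) (x : Pt d) :
    t.translate x ∈ translateSet P x :=
  Set.mem_image_of_mem _ ht

@[simp]
lemma translateSet_translateSet (P : Set (Tile d)) (x y : Pt d) :
    translateSet (translateSet P x) y = translateSet P (x + y) := by
  simp only [translateSet, Set.image_image, Tile.translate_translate]

@[simp]
lemma translateSet_zero (P : Set (Tile d)) : translateSet P 0 = P := by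
  simp [translateSet]

lemma translateSet_singleton (t : Tile d) (x : Pt d) :
    translateSet {t} x = {t.translate x} :=
  Set.image_singleton

lemma IsPartialTiling.translateSet {T : Set (Tile d)} (h : IsPartialTiling T) (x : Pt d) :
    IsPartialTiling (translateSet T x) := by
  refine ⟨?_, ?_⟩
  · rintro _ ⟨s, hs, rfl⟩
    exact (h.1 s hs).translate x
  · rintro _ ⟨s, hs, rfl⟩ _ ⟨s', hs', rfl⟩ hne
    rw [Tile.interior_translate, Tile.interior_translate,
      ← Set.image_inter (add_left_injective x), h.2 s hs s' hs' (by rintro rfl; exact hne rfl),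
      Set.image_empty]

lemma IsTilingOfSpace.translateSet {T : Set (Tile d)} (h : IsTilingOfSpace T) (x : Pt d) :
    IsTilingOfSpace (translateSet T x) := by
  refine ⟨h.1.translateSet x, Set.eq_univ_of_forall fun z => ?_⟩
  obtain ⟨t, ht, hz⟩ := Set.mem_iUnion₂.mp (h.2 ▸ Set.mem_univ (z - x) : z - x ∈ psupp T)
  exact Set.mem_biUnion (translate_mem_translateSet ht x) ⟨z - x, hz, sub_add_cancel z x⟩

lemma isPatch_singleton {t : Tile d} (ht : t.IsTile) : IsPatch ({t} : Set (Tile d)) :=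
  ⟨⟨fun _ hs => hs ▸ ht, fun _ hs _ hs' hne => absurd (hs.trans hs'.symm) hne⟩,
    Set.finite_singleton t⟩

end Translation

namespace SubstSystem

variable {d : ℕ} (S : SubstSystem d)

lemma lam_pow_ne_zero (n : ℕ) : S.lam ^ n ≠ 0 :=
  pow_ne_zero n (zero_lt_one.trans S.one_lt_lam).ne'

lemma isPuncture_self {p : Tile d} (hp : p ∈ S.proto) : S.IsPuncture p 0 :=
  ⟨p, hp, (Tile.translate_zero p).symm⟩

variable {S}

lemma IsPuncture.translate {t : Tile d} {x : Pt d} (h : S.IsPuncture t x) (y : Pt d) :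
    S.IsPuncture (t.translate y) (x + y) :=
  let ⟨p, hp, ht⟩ := h
  ⟨p, hp, by rw [ht, Tile.translate_translate]⟩

lemma IsPuncture.mem_interior {t : Tile d} {x : Pt d} (h : S.IsPuncture t x) :
    x ∈ interior t.carrier := by
  obtain ⟨p, hp, rfl⟩ := h
  rw [Tile.interior_translate]
  exact ⟨0, S.proto_zero_mem p hp, zero_add x⟩

lemma _root_.IsPartialTiling.eq_of_isPuncture {T : Set (Tile d)} (hT : IsPartialTiling T)
    {t₁ t₂ : Tile d} (h₁ : t₁ ∈ T) (h₂ : t₂ ∈ T) {x : Pt d}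
    (hx₁ : S.IsPuncture t₁ x) (hx₂ : S.IsPuncture t₂ x) : t₁ = t₂ := by
  by_contra hne
  exact (hT.2 t₁ h₁ t₂ h₂ hne).subset ⟨hx₁.mem_interior, hx₂.mem_interior⟩

variable (S)

lemma subSet_translateSet (P : Set (Tile d)) (x : Pt d) :
    S.subSet (translateSet P x) = translateSet (S.subSet P) (S.lam • x) := by
  simp only [subSet, translateSet, Set.biUnion_image, S.sub_translate, Set.image_iUnion₂]

lemma subIter_translateSet (n : ℕ) (P : Set (Tile d)) (x : Pt d) :
    S.subIter n (translateSet P x) = translateSet (S.subIter n P) (S.lam ^ n • x) := by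
  induction n generalizing P x with
  | zero => simp [subIter]
  | succ n ih =>
    simp only [subIter, Function.iterate_succ_apply] at ih ⊢
    rw [subSet_translateSet, ih, smul_smul, pow_succ]

lemma omegan_translate (n : ℕ) (t : Tile d) (x : Pt d) :
    S.omegan n (t.translate x) = translateSet (S.omegan n t) (S.lam ^ n • x) := by
  rw [omegan, ← translateSet_singleton, subIter_translateSet, omegan]

lemma mem_omegan_succ {n : ℕ} {s t : Tile d} :
    t ∈ S.omegan (n + 1) s ↔ ∃ u ∈ S.omegan n s, t ∈ S.sub u := by
  simp only [omegan, subIter, Function.iterate_succ_apply', subSet, Set.mem_iUnion₂,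
    exists_prop]

lemma mem_subIter_iff {n : ℕ} {T : Set (Tile d)} {t : Tile d} :
    t ∈ S.subIter n T ↔ ∃ s ∈ T, t ∈ S.omegan n s := by
  induction n generalizing t with
  | zero => simp [omegan, subIter]
  | succ n ih =>
    simp only [S.mem_omegan_succ]
    simp only [subIter, Function.iterate_succ_apply', subSet, Set.mem_iUnion₂,
      exists_prop] at ih ⊢
    simp only [ih]
    tauto

lemma bijOn_subIter (h : S.SubBijective) (n : ℕ) : Set.BijOn (S.subIter n) S.Omega S.Omega := by
  induction n with
  | zero => exact Set.bijOn_id S.Omega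
  | succ n ih => exact ih.comp h

lemma translateSet_mem_Omega {T : Set (Tile d)} (hT : T ∈ S.Omega) (x : Pt d) :
    translateSet T x ∈ S.Omega := by
  refine ⟨hT.1.translateSet x, fun P hPT hP => ?_⟩
  have hback : translateSet P (-x) ⊆ T := fun _ ⟨t, ht, h⟩ =>
    h ▸ mem_translateSet_iff.mp (hPT ht)
  obtain ⟨n, p, hp, y, hy⟩ := hT.2 _ hback
    ⟨hP.1.translateSet (-x), hP.2.image _⟩
  refine ⟨n, p, hp, y + x, ?_⟩
  intro t ht
  have := hy (translate_mem_translateSet ht (-x))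
  rw [mem_translateSet_iff] at this ⊢
  simpa [add_comm] using this

lemma exists_isPuncture_of_mem_sub {s t : Tile d} (hs : ∃ x, S.IsPuncture s x)
    (ht : t ∈ S.sub s) : ∃ x, S.IsPuncture t x := by
  obtain ⟨x, p, hp, rfl⟩ := hs
  rw [S.sub_translate] at ht
  obtain ⟨w, hw, rfl⟩ := ht
  obtain ⟨q, hq, y, rfl⟩ := S.sub_proto p hp w hw
  exact ⟨_, IsPuncture.translate ⟨q, hq, rfl⟩ _⟩

lemma exists_isPuncture_of_mem_omegan {s t : Tile d} (hs : ∃ x, S.IsPuncture s x) {n : ℕ}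
    (ht : t ∈ S.omegan n s) : ∃ x, S.IsPuncture t x := by
  induction n generalizing t with
  | zero => rwa [show t = s from ht]
  | succ n ih =>
    obtain ⟨u, hu, htu⟩ := S.mem_omegan_succ.mp ht
    exact S.exists_isPuncture_of_mem_sub (ih hu) htu

lemma exists_isPuncture_of_mem_Omega {T : Set (Tile d)} (hT : T ∈ S.Omega) {t : Tile d}
    (ht : t ∈ T) : ∃ x, S.IsPuncture t x := by
  obtain ⟨n, p, hp, y, hy⟩ := hT.2 {t} (Set.singleton_subset_iff.mpr ht)
    (isPatch_singleton (hT.1.1.1 t ht))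
  obtain ⟨x, hx⟩ := S.exists_isPuncture_of_mem_omegan ⟨0, S.isPuncture_self hp⟩
    (mem_translateSet_iff.mp (hy rfl))
  exact ⟨x + y, by simpa using hx.translate y⟩

lemma carrier_subset_of_mem_sub {s t : Tile d} (hs : ∃ x, S.IsPuncture s x)
    (ht : t ∈ S.sub s) : t.carrier ⊆ S.lam • s.carrier := by
  obtain ⟨x, p, hp, rfl⟩ := hs
  rw [S.sub_translate] at ht
  obtain ⟨w, hw, rfl⟩ := ht
  rintro _ ⟨z, hz, rfl⟩
  obtain ⟨a, ha, rfl⟩ : z ∈ S.lam • p.carrier := S.sub_supp p hp ▸ Set.mem_biUnion hw hz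
  exact ⟨a + x, ⟨a, ha, rfl⟩, smul_add _ _ _⟩

lemma carrier_subset_of_mem_omegan {s t : Tile d} (hs : ∃ x, S.IsPuncture s x) {n : ℕ}
    (ht : t ∈ S.omegan n s) : t.carrier ⊆ S.lam ^ n • s.carrier := by
  induction n generalizing t with
  | zero => rw [show t = s from ht, pow_zero, one_smul]
  | succ n ih =>
    obtain ⟨u, hu, htu⟩ := S.mem_omegan_succ.mp ht
    calc t.carrier ⊆ S.lam • u.carrier :=
          S.carrier_subset_of_mem_sub (S.exists_isPuncture_of_mem_omegan hs hu) htu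
      _ ⊆ S.lam • S.lam ^ n • s.carrier := Set.smul_set_mono (ih hu)
      _ = S.lam ^ (n + 1) • s.carrier := by rw [smul_smul, pow_succ']

variable {S} in
lemma _root_.IsPartialTiling.eq_of_mem_omegan {T : Set (Tile d)} (hT : IsPartialTiling T)
    {s₁ s₂ : Tile d} (h₁ : s₁ ∈ T) (h₂ : s₂ ∈ T) (hs₁ : ∃ x, S.IsPuncture s₁ x)
    (hs₂ : ∃ x, S.IsPuncture s₂ x) {n : ℕ} {t : Tile d} (ht₁ : t ∈ S.omegan n s₁)
    (ht₂ : t ∈ S.omegan n s₂) : s₁ = s₂ := by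
  obtain ⟨z, hz⟩ := S.exists_isPuncture_of_mem_omegan hs₁ ht₁
  have hmem : ∀ s, (∃ x, S.IsPuncture s x) → t ∈ S.omegan n s →
      (S.lam ^ n)⁻¹ • z ∈ interior s.carrier := fun s hs ht => by
    rw [← Set.mem_smul_set_iff_inv_smul_mem₀ (S.lam_pow_ne_zero n),
      ← interior_smul₀ (S.lam_pow_ne_zero n)]
    exact interior_mono (S.carrier_subset_of_mem_omegan hs ht) hz.mem_interior
  by_contra hne
  exact (hT.2 s₁ h₁ s₂ h₂ hne).subset ⟨hmem s₁ hs₁ ht₁, hmem s₂ hs₂ ht₂⟩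

theorem exists_eq_translateSet_subIter (hS : S.SubBijective) (n : ℕ) {T' : Set (Tile d)}
    (hT' : T' ∈ S.OmegaPunc) : ∃ p ∈ S.proto, ∃ x ∈ S.Punc n p, ∃ T ∈ S.OmegaPunc,
      p ∈ T ∧ T' = translateSet (S.subIter n T) (-x) := by
  obtain ⟨hT'Ω, t', ht', ht'0⟩ := hT'
  obtain ⟨T₀, hT₀, rfl⟩ := (S.bijOn_subIter hS n).surjOn hT'Ω
  obtain ⟨s, hs, ht's⟩ := S.mem_subIter_iff.mp ht'
  obtain ⟨y, p, hp, rfl⟩ := S.exists_isPuncture_of_mem_Omega hT₀ hs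
  have hpT : p ∈ translateSet T₀ (-y) := mem_translateSet_iff.mpr (by simpa using hs)
  refine ⟨p, hp, -(S.lam ^ n • y), ?_, translateSet T₀ (-y),
    ⟨S.translateSet_mem_Omega hT₀ _, p, hpT, S.isPuncture_self hp⟩, hpT, ?_⟩
  · rw [omegan_translate] at ht's
    exact ⟨_, mem_translateSet_iff.mp ht's, by simpa using ht'0.translate (-(S.lam ^ n • y))⟩
  · simp [subIter_translateSet]

theorem eq_of_translateSet_subIter_eq (hS : S.SubBijective) {n : ℕ} {p₁ p₂ : Tile d}
    (hp₁ : p₁ ∈ S.proto) (hp₂ : p₂ ∈ S.proto) {x₁ x₂ : Pt d} (hx₁ : x₁ ∈ S.Punc n p₁)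
    (hx₂ : x₂ ∈ S.Punc n p₂) {T₁ T₂ : Set (Tile d)} (hT₁ : T₁ ∈ S.Omega) (hT₂ : T₂ ∈ S.Omega)
    (hpT₁ : p₁ ∈ T₁) (hpT₂ : p₂ ∈ T₂)
    (h : translateSet (S.subIter n T₁) (-x₁) = translateSet (S.subIter n T₂) (-x₂)) :
    p₁ = p₂ ∧ x₁ = x₂ ∧ T₁ = T₂ := by
  obtain ⟨t₁, ht₁, hpt₁⟩ := hx₁
  obtain ⟨t₂, ht₂, hpt₂⟩ := hx₂
  have hbij := S.bijOn_subIter hS n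
  have ht : t₂.translate (x₁ - x₂) = t₁ := by
    have h₀ : t₁.translate (-x₁) = t₂.translate (-x₂) :=
      (S.translateSet_mem_Omega (hbij.mapsTo hT₁) (-x₁)).1.1.eq_of_isPuncture
        (translate_mem_translateSet (S.mem_subIter_iff.mpr ⟨p₁, hpT₁, ht₁⟩) _)
        (h ▸ translate_mem_translateSet (S.mem_subIter_iff.mpr ⟨p₂, hpT₂, ht₂⟩) _)
        (by simpa using hpt₁.translate (-x₁)) (by simpa using hpt₂.translate (-x₂))
    simpa [neg_add_eq_sub] using (congrArg (Tile.translate · x₁) h₀).symm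
  set v := (S.lam ^ n)⁻¹ • (x₁ - x₂)
  have hv : S.lam ^ n • v = x₁ - x₂ := smul_inv_smul₀ (S.lam_pow_ne_zero n) _
  have hT : T₁ = translateSet T₂ v := by
    refine hbij.injOn hT₁ (S.translateSet_mem_Omega hT₂ v) ?_
    simpa [subIter_translateSet, hv, neg_add_eq_sub] using congrArg (translateSet · x₁) h
  have hp : p₁.translate (-v) = p₂ := by
    refine hT₂.1.1.eq_of_mem_omegan (mem_translateSet_iff.mp (hT ▸ hpT₁)) hpT₂
      ⟨-v, p₁, hp₁, rfl⟩ ⟨0, S.isPuncture_self hp₂⟩ ?_ ht₂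
    rw [omegan_translate, mem_translateSet_iff, smul_neg, neg_neg, hv, ht]
    exact ht₁
  obtain ⟨rfl, hv0⟩ := S.proto_no_translate p₁ hp₁ p₂ hp₂ (-v) hp.symm
  have hv0 : v = 0 := neg_eq_zero.mp hv0
  refine ⟨rfl, ?_, by rw [hT, hv0, translateSet_zero]⟩
  rw [← sub_eq_zero, ← hv, hv0, smul_zero]

end SubstSystem

theorem stmt18_general {d : ℕ} (S : SubstSystem d) (hA3 : S.SubBijective)
    (n : ℕ) (T' : Set (Tile d)) (hT' : T' ∈ S.OmegaPunc) :
    (∃ p ∈ S.proto, ∃ x ∈ S.Punc n p, ∃ T ∈ S.OmegaPunc,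
      p ∈ T ∧ T' = translateSet (S.subIter n T) (-x)) ∧
    (∀ p₁ ∈ S.proto, ∀ x₁ ∈ S.Punc n p₁, ∀ T₁ ∈ S.OmegaPunc,
     ∀ p₂ ∈ S.proto, ∀ x₂ ∈ S.Punc n p₂, ∀ T₂ ∈ S.OmegaPunc,
      p₁ ∈ T₁ → T' = translateSet (S.subIter n T₁) (-x₁) →
      p₂ ∈ T₂ → T' = translateSet (S.subIter n T₂) (-x₂) →
      p₁ = p₂ ∧ x₁ = x₂ ∧ T₁ = T₂) :=
  ⟨S.exists_eq_translateSet_subIter hA3 n hT',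
    fun _ hp₁ _ hx₁ _ hT₁ _ hp₂ _ hx₂ _ hT₂ hpT₁ h₁ hpT₂ h₂ =>
      S.eq_of_translateSet_subIter_eq hA3 hp₁ hp₂ hx₁ hx₂ hT₁.1 hT₂.1 hpT₁ hpT₂ (h₁ ▸ h₂)⟩

/-- For every `n`, `Ω_punc` is the disjoint union over `p ∈ 𝒫` and
`x ∈ Punc(n, p)` of the sets `{ω^n(T) − x : T ∈ Ω_punc, p ∈ T}`: every `T' ∈ Ω_punc`
is of the form `ω^n(T) − x` for a unique triple `(p, x, T)`. -/
theorem stmt18 {d : ℕ} (hd : 1 ≤ d) (S : SubstSystem d)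
    (hA1 : S.Primitive) (hA2 : S.FLC) (hA3 : S.SubBijective)
    (n : ℕ) (T' : Set (Tile d)) (hT' : T' ∈ S.OmegaPunc) :
    (∃ p ∈ S.proto, ∃ x ∈ S.Punc n p, ∃ T ∈ S.OmegaPunc,
      p ∈ T ∧ T' = translateSet (S.subIter n T) (-x)) ∧
    (∀ p₁ ∈ S.proto, ∀ x₁ ∈ S.Punc n p₁, ∀ T₁ ∈ S.OmegaPunc,
     ∀ p₂ ∈ S.proto, ∀ x₂ ∈ S.Punc n p₂, ∀ T₂ ∈ S.OmegaPunc,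
      p₁ ∈ T₁ → T' = translateSet (S.subIter n T₁) (-x₁) →
      p₂ ∈ T₂ → T' = translateSet (S.subIter n T₂) (-x₂) →
      p₁ = p₂ ∧ x₁ = x₂ ∧ T₁ = T₂) :=
  stmt18_general S hA3 n T' hT'
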